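/- arXiv:2109.12165 — 3 statements merged into one kernel-verified Lean document; each statement's English description precedes it below -/
import Mathlib

section
/- Let 𝓕 be a finite set of vectors in ℤ³. For each f ∈ 𝓕 let ψ_f ∈ C^∞(𝕋³;ℝ) satisfy f·∇ψ_f = 0, let γ_f ∈ ℝ and x̄(f) ∈ ℝ³, and let λ be a positive integer. If the supports of the vector fields x ↦ ψ_f(λ(x − x̄(f))) f, f ∈ 𝓕, are pairwise disjoint subsets of 𝕋³, then the vector field u(x) = Σ_{f∈𝓕} γ_f ψ_f(λ(x − x̄(f))) f is a stationary solution of the incompressible Euler equations on 𝕋³ with constant pressure; that is, div u = 0 and div(u ⊗ u) = 0 pointwise on 𝕋³. -/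
open MeasureTheory

noncomputable section

/-- Points of (a fundamental domain of) the 3-dimensional torus are elements of `Fin 3 → ℝ`. -/
abbrev V3 : Type := Fin 3 → ℝ

/-- The `i`-th standard basis vector of `ℝ³`. -/
def e3 (i : Fin 3) : V3 := Pi.single i 1

/-- A function on `ℝ³` is (`2π`-)periodic, i.e. descends to the torus `𝕋³`. -/
def PerSpace {α : Type*} (f : V3 → α) : Prop :=
  ∀ (x : V3) (v : Fin 3 → ℤ), f (fun i => x i + 2 * Real.pi * v i) = f x

/-- The (shifted, rescaled) Mikado flow with direction `f`, profile `ψ`, shift `xb`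
and oscillation parameter `lam`:  `x ↦ ψ (lam (x - xb)) • f`. -/
def mikado (f : Fin 3 → ℤ) (ψ : V3 → ℝ) (xb : V3) (lam : ℕ) (x : V3) : V3 :=
  fun j => ψ (fun i => (lam : ℝ) * (x i - xb i)) * (f j : ℝ)

/-- The scalar profile of a shifted rescaled Mikado flow. -/
def phiAux (ψ : V3 → ℝ) (xb : V3) (lam : ℕ) (x : V3) : ℝ :=
  ψ (fun i => (lam : ℝ) * (x i - xb i))

lemma phiAux_hasFDerivAt (ψ : V3 → ℝ) (hψ : Differentiable ℝ ψ) (xb : V3) (lam : ℕ) (x : V3) :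
    HasFDerivAt (phiAux ψ xb lam)
      ((fderiv ℝ ψ (fun i => (lam : ℝ) * (x i - xb i))).comp
        ((lam : ℝ) • ContinuousLinearMap.id ℝ V3)) x := by
  have hL : HasFDerivAt (fun y : V3 => (fun i => (lam : ℝ) * (y i - xb i) : V3))
      ((lam : ℝ) • ContinuousLinearMap.id ℝ V3) x := by
    have heq : (fun y : V3 => (fun i => (lam : ℝ) * (y i - xb i) : V3))
        = fun y : V3 => (lam : ℝ) • (y - xb) := by
      funext y i; simp [Pi.smul_apply]
    rw [heq]
    exact ((hasFDerivAt_id x).sub_const xb).const_smul ((lam : ℝ))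
  exact ((hψ _).hasFDerivAt).comp x hL

/-- **Mikado flows are stationary Euler flows.**  If the supports of the individual
(shifted) Mikado flows are pairwise disjoint, then any linear combination of them is a
stationary solution of the incompressible Euler equations with constant pressure:
`div u = 0` and `div (u ⊗ u) = 0` pointwise. -/
theorem statement4 (𝓕 : Finset (Fin 3 → ℤ))
    (ψ : (Fin 3 → ℤ) → V3 → ℝ) (γc : (Fin 3 → ℤ) → ℝ) (xb : (Fin 3 → ℤ) → V3)
    (lam : ℕ) (hlam : 0 < lam)
    (hψsmooth : ∀ f ∈ 𝓕, ContDiff ℝ (⊤ : ℕ∞) (ψ f))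
    (hψper : ∀ f ∈ 𝓕, PerSpace (ψ f))
    (hdir : ∀ f ∈ 𝓕, ∀ x : V3, ∑ i, (f i : ℝ) * fderiv ℝ (ψ f) x (e3 i) = 0)
    (hdisj : ∀ f ∈ 𝓕, ∀ g ∈ 𝓕, f ≠ g →
      Disjoint (Function.support (mikado f (ψ f) (xb f) lam))
        (Function.support (mikado g (ψ g) (xb g) lam))) :
    ∀ u : V3 → V3, (u = fun x => ∑ f ∈ 𝓕, γc f • mikado f (ψ f) (xb f) lam x) →
      (∀ x : V3, ∑ i, fderiv ℝ (fun y => u y i) x (e3 i) = 0) ∧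
      (∀ x : V3, ∀ i : Fin 3,
        ∑ j, fderiv ℝ (fun y => u y i * u y j) x (e3 j) = 0) := by
  intro u hu
  have hdiff : ∀ f ∈ 𝓕, Differentiable ℝ (ψ f) := fun f hf =>
    (hψsmooth f hf).differentiable (by simp)
  -- Rewriting of the components of u
  have h1 : ∀ i : Fin 3, (fun y => u y i)
      = fun y => ∑ f ∈ 𝓕, (γc f * (f i : ℝ)) * phiAux (ψ f) (xb f) lam y := by
    intro i; funext y
    rw [hu]
    simp only [Finset.sum_apply, Pi.smul_apply, mikado, smul_eq_mul, phiAux]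
    exact Finset.sum_congr rfl fun f _ => by ring
  constructor
  · -- divergence free
    intro x
    have hder : ∀ i : Fin 3, fderiv ℝ (fun y => u y i) x (e3 i)
        = ∑ f ∈ 𝓕, (γc f * (f i : ℝ)) *
            ((lam : ℝ) * fderiv ℝ (ψ f) (fun k => (lam : ℝ) * (x k - xb f k)) (e3 i)) := by
      intro i
      have hH : HasFDerivAt (fun y => u y i)
          (∑ f ∈ 𝓕, (γc f * (f i : ℝ)) •
            ((fderiv ℝ (ψ f) (fun k => (lam : ℝ) * (x k - xb f k))).comp
              ((lam : ℝ) • ContinuousLinearMap.id ℝ V3))) x := by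
        rw [h1 i]
        exact HasFDerivAt.fun_sum fun f hf =>
          (phiAux_hasFDerivAt (ψ f) (hdiff f hf) (xb f) lam x).const_mul _
      rw [hH.fderiv]
      simp [mul_assoc]
    simp only [hder]
    rw [Finset.sum_comm]
    refine Finset.sum_eq_zero fun f hf => ?_
    have hz := hdir f hf (fun k => (lam : ℝ) * (x k - xb f k))
    calc ∑ i, (γc f * (f i : ℝ)) *
          ((lam : ℝ) * fderiv ℝ (ψ f) (fun k => (lam : ℝ) * (x k - xb f k)) (e3 i))
        = (γc f * (lam : ℝ)) *
            ∑ i, (f i : ℝ) * fderiv ℝ (ψ f) (fun k => (lam : ℝ) * (x k - xb f k)) (e3 i) := by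
          rw [Finset.mul_sum]; exact Finset.sum_congr rfl fun i _ => by ring
      _ = 0 := by rw [hz, mul_zero]
  · -- div (u ⊗ u) = 0
    intro x i
    -- rewrite u_i u_j using disjointness of supports
    have h2 : ∀ j : Fin 3, (fun y => u y i * u y j)
        = fun y => ∑ f ∈ 𝓕, (γc f * γc f * (f i : ℝ) * (f j : ℝ)) *
            (phiAux (ψ f) (xb f) lam y * phiAux (ψ f) (xb f) lam y) := by
      intro j; funext y
      rw [hu]
      simp only [Finset.sum_apply, Pi.smul_apply, mikado, smul_eq_mul]
      rw [Finset.sum_mul_sum]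
      refine Finset.sum_congr rfl fun f hf => ?_
      rw [Finset.sum_eq_single_of_mem f hf]
      · simp only [phiAux]; ring
      · intro g hg hne
        have hd := hdisj f hf g hg fun h => hne h.symm
        by_cases hy : mikado f (ψ f) (xb f) lam y = 0
        · have h0 : ψ f (fun k => (lam : ℝ) * (y k - xb f k)) * (f i : ℝ) = 0 :=
            congrFun hy i
          rw [h0]; ring
        · have hy2 : mikado g (ψ g) (xb g) lam y = 0 := by
            have := Set.disjoint_left.mp hd (Function.mem_support.mpr hy)
            exact Function.notMem_support.mp this
          have h0 : ψ g (fun k => (lam : ℝ) * (y k - xb g k)) * (g j : ℝ) = 0 :=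
            congrFun hy2 j
          rw [h0]; ring
    have hder : ∀ j : Fin 3, fderiv ℝ (fun y => u y i * u y j) x (e3 j)
        = ∑ f ∈ 𝓕, (γc f * γc f * (f i : ℝ) * (f j : ℝ)) *
            (2 * phiAux (ψ f) (xb f) lam x *
              ((lam : ℝ) * fderiv ℝ (ψ f) (fun k => (lam : ℝ) * (x k - xb f k)) (e3 j))) := by
      intro j
      have hH : HasFDerivAt (fun y => u y i * u y j)
          (∑ f ∈ 𝓕, (γc f * γc f * (f i : ℝ) * (f j : ℝ)) •
            (phiAux (ψ f) (xb f) lam x •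
              ((fderiv ℝ (ψ f) (fun k => (lam : ℝ) * (x k - xb f k))).comp
                ((lam : ℝ) • ContinuousLinearMap.id ℝ V3)) +
             phiAux (ψ f) (xb f) lam x •
              ((fderiv ℝ (ψ f) (fun k => (lam : ℝ) * (x k - xb f k))).comp
                ((lam : ℝ) • ContinuousLinearMap.id ℝ V3)))) x := by
        rw [h2 j]
        refine HasFDerivAt.fun_sum fun f hf => ?_
        have hφ := phiAux_hasFDerivAt (ψ f) (hdiff f hf) (xb f) lam x
        exact (hφ.mul hφ).const_mul _
      rw [hH.fderiv]
      simp only [ContinuousLinearMap.coe_sum', Finset.sum_apply,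
        ContinuousLinearMap.coe_smul', Pi.smul_apply, ContinuousLinearMap.add_apply,
        ContinuousLinearMap.comp_apply, ContinuousLinearMap.smul_apply,
        ContinuousLinearMap.coe_id', id_eq, ContinuousLinearMap.map_smul, smul_eq_mul]
      exact Finset.sum_congr rfl fun f _ => by ring
    simp only [hder]
    rw [Finset.sum_comm]
    refine Finset.sum_eq_zero fun f hf => ?_
    have hz := hdir f hf (fun k => (lam : ℝ) * (x k - xb f k))
    calc ∑ j, (γc f * γc f * (f i : ℝ) * (f j : ℝ)) *
          (2 * phiAux (ψ f) (xb f) lam x *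
            ((lam : ℝ) * fderiv ℝ (ψ f) (fun k => (lam : ℝ) * (x k - xb f k)) (e3 j)))
        = (γc f * γc f * (f i : ℝ) * 2 * phiAux (ψ f) (xb f) lam x * (lam : ℝ)) *
            ∑ j, (f j : ℝ) * fderiv ℝ (ψ f) (fun k => (lam : ℝ) * (x k - xb f k)) (e3 j) := by
          rw [Finset.mul_sum]; exact Finset.sum_congr rfl fun j _ => by ring
      _ = 0 := by rw [hz, mul_zero]
end
end

section
/- Let 𝓕 = {f₁, …, f₆} be a set of six vectors in ℤ³ such that Σ_{i=1}^6 f_i ⊗ f_i = C·Id for some constant C > 0 and such that {f_i ⊗ f_i}_{i=1}^6 forms a basis of the space 𝕊 of symmetric 3×3 real matrices. Then there exists a constant N₀ = N₀(𝓕) > 0 such that for every N with 0 < N ≤ N₀ there exist smooth positive functions Γ_{f_i} ∈ C^∞(S_N; (0,∞)), i = 1, …, 6, defined on S_N = {Id − K : K symmetric, |K|_∞ ≤ N}, satisfying Id − K = Σ_{i=1}^6 Γ_{f_i}(Id − K)² (f_i ⊗ f_i) for all Id − K ∈ S_N. -/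
noncomputable section

/-- `3×3` real matrices, as `Fin 3 → Fin 3 → ℝ`. -/
abbrev M3 : Type := Fin 3 → Fin 3 → ℝ

/-- The tensor product `f ⊗ f` of an integer vector with itself, as a real matrix. -/
def outer (f : Fin 3 → ℤ) : M3 := fun i j => (f i : ℝ) * (f j : ℝ)

/-- The `3×3` identity matrix. -/
def idM : M3 := fun i j => if i = j then 1 else 0

/-- A matrix is symmetric. -/
def symM (A : M3) : Prop := ∀ i j, A i j = A j i

/-- The set `S_N = {Id - K : K symmetric, |K|_∞ ≤ N}`. -/
def SN (N : ℝ) : Set M3 :=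
  {A : M3 | symM A ∧ ∀ l m, |idM l m - A l m| ≤ N}

/-- **Geometric Lemma I.**  If six integer vectors `f i` satisfy `∑ f i ⊗ f i = C·Id` and
`{f i ⊗ f i}` is a basis of the symmetric `3×3` matrices, then there is `N₀ > 0` such that
for every `0 < N ≤ N₀` there are smooth positive functions `Γ_{f i}` on
`S_N = {Id - K : K symmetric, |K|_∞ ≤ N}` with
`Id - K = ∑ Γ_{f i}(Id - K)² (f i ⊗ f i)` on `S_N`. -/
theorem statement5 (f : Fin 6 → Fin 3 → ℤ) (C : ℝ) (hC : 0 < C)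
    (hsum : ∑ i : Fin 6, outer (f i) = C • idM)
    (hli : LinearIndependent ℝ (fun i : Fin 6 => outer (f i)))
    (hspan : ∀ A : M3, symM A → ∃ c : Fin 6 → ℝ, A = ∑ i : Fin 6, c i • outer (f i)) :
    ∃ N₀ : ℝ, 0 < N₀ ∧ ∀ N : ℝ, 0 < N → N ≤ N₀ →
      ∃ Γ : Fin 6 → M3 → ℝ,
        (∀ i, ContDiffOn ℝ (⊤ : ℕ∞) (Γ i) (SN N)) ∧
        (∀ i, ∀ A ∈ SN N, 0 < Γ i A) ∧
        (∀ A ∈ SN N, A = ∑ i : Fin 6, (Γ i A) ^ 2 • outer (f i)) := by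
  classical
  set p := Submodule.span ℝ (Set.range fun i : Fin 6 => outer (f i)) with hp
  let b : Module.Basis (Fin 6) ℝ p := Module.Basis.span hli
  have hext : ∀ i : Fin 6, ∃ g : M3 →ₗ[ℝ] ℝ, g ∘ₗ p.subtype = b.coord i :=
    fun i => (b.coord i).exists_extend
  choose g hg using hext
  let Φ : Fin 6 → M3 →L[ℝ] ℝ := fun i => (g i).toContinuousLinearMap
  have hΦapp : ∀ i A, Φ i A = g i A := fun i A => rfl
  have hgval : ∀ i (x : p), g i (x : M3) = b.repr x i := by
    intro i x
    have := congrFun (congrArg DFunLike.coe (hg i)) x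
    simpa [Module.Basis.coord_apply] using this
  -- representation of elements of p
  have hrep : ∀ A, A ∈ p → A = ∑ i : Fin 6, (Φ i A) • outer (f i) := by
    intro A hA
    have h1 : ((⟨A, hA⟩ : p) : M3) = ∑ i : Fin 6, b.repr ⟨A, hA⟩ i • ((b i : p) : M3) := by
      conv_lhs => rw [← b.sum_repr ⟨A, hA⟩]
      push_cast [Submodule.coe_sum]
      rfl
    refine Eq.trans h1 ?_
    refine Finset.sum_congr rfl fun i _ => ?_
    rw [hΦapp, hgval i ⟨A, hA⟩, Module.Basis.span_apply]
  -- membership of symmetric matrices in p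
  have hmem : ∀ A : M3, symM A → A ∈ p := by
    intro A hA
    obtain ⟨c, hc⟩ := hspan A hA
    rw [hc]
    exact Submodule.sum_mem _ fun i _ =>
      Submodule.smul_mem _ _ (Submodule.subset_span (Set.mem_range_self i))
  have hsymId : symM idM := by intro i j; simp [idM, eq_comm]
  have hIdmem : idM ∈ p := hmem idM hsymId
  -- Φ i idM = C⁻¹
  have hΦId : ∀ i, Φ i idM = C⁻¹ := by
    intro i
    have h1 : idM = ∑ j : Fin 6, (Φ j idM) • outer (f j) := hrep idM hIdmem
    have h2 : idM = ∑ j : Fin 6, (C⁻¹ : ℝ) • outer (f j) := by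
      rw [← Finset.smul_sum, hsum, smul_smul, inv_mul_cancel₀ hC.ne', one_smul]
    have h3 : ∑ j : Fin 6, ((Φ j idM) - C⁻¹) • outer (f j) = 0 := by
      simp only [sub_smul, Finset.sum_sub_distrib, ← h1, ← h2, sub_self]
    have := Fintype.linearIndependent_iff.mp hli _ h3 i
    linarith [this]
  -- norm bound on SN
  have hnorm : ∀ N : ℝ, 0 < N → ∀ A ∈ SN N, ‖idM - A‖ ≤ N := by
    intro N hN A hA
    refine (pi_norm_le_iff_of_nonneg hN.le).mpr fun l => ?_
    refine (pi_norm_le_iff_of_nonneg hN.le).mpr fun m => ?_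
    simpa [Real.norm_eq_abs] using hA.2 l m
  set S : ℝ := ∑ i : Fin 6, ‖Φ i‖ with hS
  have hSnn : (0:ℝ) ≤ S := Finset.sum_nonneg fun i _ => norm_nonneg _
  have hΦle : ∀ i, ‖Φ i‖ ≤ S + 1 := by
    intro i
    have : ‖Φ i‖ ≤ S := Finset.single_le_sum (fun j _ => norm_nonneg (Φ j)) (Finset.mem_univ i)
    linarith
  refine ⟨C⁻¹ / (2 * (S + 1)), by positivity, fun N hN hNle => ?_⟩
  -- positivity of Φ i A on SN N
  have hpos : ∀ i, ∀ A ∈ SN N, C⁻¹ / 2 ≤ Φ i A := by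
    intro i A hA
    have h1 : |Φ i (idM - A)| ≤ ‖Φ i‖ * N := by
      calc |Φ i (idM - A)| = ‖Φ i (idM - A)‖ := (Real.norm_eq_abs _).symm
      _ ≤ ‖Φ i‖ * ‖idM - A‖ := (Φ i).le_opNorm _
      _ ≤ ‖Φ i‖ * N := by
          exact mul_le_mul_of_nonneg_left (hnorm N hN A hA) (norm_nonneg _)
    have h2 : ‖Φ i‖ * N ≤ C⁻¹ / 2 := by
      calc ‖Φ i‖ * N ≤ (S + 1) * (C⁻¹ / (2 * (S + 1))) := by
            apply mul_le_mul (hΦle i) hNle hN.le (by linarith)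
      _ = C⁻¹ / 2 := by field_simp
    have h3 : Φ i A = Φ i idM - Φ i (idM - A) := by rw [map_sub]; ring
    rw [h3, hΦId i]
    have := abs_le.mp h1
    linarith [this.1, this.2]
  have hC2 : (0:ℝ) < C⁻¹ / 2 := by positivity
  refine ⟨fun i A => Real.sqrt (Φ i A), ?_, ?_, ?_⟩
  · intro i
    intro A hA
    have hpA : (0:ℝ) < Φ i A := lt_of_lt_of_le hC2 (hpos i A hA)
    exact ((Real.contDiffAt_sqrt hpA.ne').comp A
      ((Φ i).contDiff.contDiffAt)).contDiffWithinAt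
  · intro i A hA
    exact Real.sqrt_pos.mpr (lt_of_lt_of_le hC2 (hpos i A hA))
  · intro A hA
    have hAmem : A ∈ p := hmem A hA.1
    conv_lhs => rw [hrep A hAmem]
    refine Finset.sum_congr rfl fun i _ => ?_
    rw [Real.sq_sqrt (le_of_lt (lt_of_lt_of_le hC2 (hpos i A hA)))]
end
end

section
/- Let {f₁, f₂, f₃} ⊂ ℤ³ \ {0} be an orthogonal frame (three pairwise orthogonal nonzero integer vectors) and set f₄ = −(f₁ + f₂ + f₃). Then for every N₀ > 0 there exist affine functions Γ_{f_k} : 𝓥_{N₀} → [N₀, ∞), k = 1, 2, 3, 4, defined on the closed ball 𝓥_{N₀} = {m ∈ ℝ³ : |m| ≤ N₀}, such that m = Σ_{k=1}^4 Γ_{f_k}(m) f_k for every m ∈ 𝓥_{N₀}. -/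
noncomputable section
open Matrix

/-- **Geometric Lemma II.**  If `f 0, f 1, f 2` are pairwise orthogonal nonzero integer
vectors and `f 3 = -(f 0 + f 1 + f 2)`, then for every `N₀ > 0` there are affine functions
`Γ k : 𝓥_{N₀} → [N₀, ∞)` with `m = ∑ₖ Γ k (m) • f k` on the closed Euclidean ball
`𝓥_{N₀} = {m : |m| ≤ N₀}`. -/
theorem statement6 (f : Fin 4 → Fin 3 → ℤ)
    (hne : ∀ k : Fin 4, k ≠ 3 → f k ≠ 0)
    (horth : ∀ k l : Fin 4, k ≠ 3 → l ≠ 3 → k ≠ l → ∑ i, (f k i : ℝ) * (f l i : ℝ) = 0)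
    (hf4 : ∀ i, f 3 i = -(f 0 i + f 1 i + f 2 i)) :
    ∀ N₀ : ℝ, 0 < N₀ →
      ∃ Γ : Fin 4 → V3 → ℝ,
        (∀ k : Fin 4, ∃ a : V3, ∃ c : ℝ, ∀ m : V3, Γ k m = (∑ i, a i * m i) + c) ∧
        (∀ m : V3, Real.sqrt (∑ i, m i ^ 2) ≤ N₀ →
          (∀ k : Fin 4, N₀ ≤ Γ k m) ∧ (∀ i : Fin 3, m i = ∑ k : Fin 4, Γ k m * (f k i : ℝ))) := by
  intro N₀ hN₀
  -- the map Fin 3 → Fin 4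
  set e : Fin 3 → Fin 4 := fun k => ⟨k.val, by omega⟩ with he
  have he3 : ∀ k : Fin 3, e k ≠ 3 := by
    intro k h
    have := k.isLt
    have : (e k).val = (3 : Fin 4).val := by rw [h]
    simp [he] at this
    omega
  have heinj : Function.Injective e := by
    intro a b h
    have : (e a).val = (e b).val := by rw [h]
    simpa [he, Fin.ext_iff] using this
  set g : Fin 3 → Fin 3 → ℝ := fun k i => (f (e k) i : ℝ) with hgdef
  set d : Fin 3 → ℝ := fun k => ∑ i, (g k i) ^ 2 with hddef
  have hd1 : ∀ k, 1 ≤ d k := by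
    intro k
    obtain ⟨i, hi⟩ : ∃ i, f (e k) i ≠ 0 := by
      by_contra h
      push_neg at h
      exact hne (e k) (he3 k) (funext h)
    have h1 : (1 : ℝ) ≤ (g k i) ^ 2 := by
      have h2 : (1 : ℤ) ≤ (f (e k) i) ^ 2 := by
        rcases lt_or_gt_of_ne hi with h | h <;> nlinarith
      have h3 : (1 : ℝ) ≤ ((f (e k) i : ℝ)) ^ 2 := by exact_mod_cast h2
      simpa [hgdef] using h3
    calc (1:ℝ) ≤ (g k i)^2 := h1
      _ ≤ d k := Finset.single_le_sum (fun j _ => sq_nonneg (g k j)) (Finset.mem_univ i)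
  have hd0 : ∀ k, d k ≠ 0 := fun k => by linarith [hd1 k]
  -- matrix identity
  set A : Matrix (Fin 3) (Fin 3) ℝ := Matrix.of g with hA
  set B : Matrix (Fin 3) (Fin 3) ℝ := Aᵀ * Matrix.diagonal (fun k => (d k)⁻¹) with hB
  have hAB : A * B = 1 := by
    rw [hB, ← Matrix.mul_assoc]
    have hAAT : A * Aᵀ = Matrix.diagonal d := by
      ext k l
      simp only [Matrix.mul_apply, Matrix.transpose_apply, hA, Matrix.of_apply,
        Matrix.diagonal_apply]
      by_cases hkl : k = l
      · subst hkl
        simp [hddef, sq]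
      · rw [if_neg hkl]
        have := horth (e k) (e l) (he3 k) (he3 l) (fun h => hkl (heinj h))
        simpa [hgdef] using this
    rw [hAAT, Matrix.diagonal_mul_diagonal]
    convert Matrix.diagonal_one using 2
    ext k
    exact mul_inv_cancel₀ (hd0 k)
  have hBA : B * A = 1 := mul_eq_one_comm.mp hAB
  have key : ∀ i j : Fin 3, (∑ k, (d k)⁻¹ * g k j * g k i) = if i = j then 1 else 0 := by
    intro i j
    have h : (B * A) i j = (1 : Matrix (Fin 3) (Fin 3) ℝ) i j := by rw [hBA]
    simp only [Matrix.mul_apply, hB, hA, Matrix.mul_diagonal, Matrix.transpose_apply,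
      Matrix.of_apply, Matrix.one_apply] at h
    rw [← h]
    apply Finset.sum_congr rfl
    intros k _
    simp [Matrix.diagonal_apply, mul_ite, mul_zero]
    ring
  -- the coefficients
  set c : Fin 3 → V3 → ℝ := fun k m => ∑ j, (d k)⁻¹ * g k j * m j with hcdef
  have hrec : ∀ (m : V3) (i : Fin 3), (∑ k, c k m * g k i) = m i := by
    intro m i
    have step : ∀ k : Fin 3, c k m * g k i = ∑ j, ((d k)⁻¹ * g k j * g k i) * m j := by
      intro k
      rw [hcdef]
      simp only [Finset.sum_mul]
      apply Finset.sum_congr rfl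
      intros j _
      ring
    rw [Finset.sum_congr rfl fun k _ => step k, Finset.sum_comm]
    have : ∀ j : Fin 3, (∑ k, ((d k)⁻¹ * g k j * g k i) * m j) = (if i = j then 1 else 0) * m j := by
      intro j
      rw [← Finset.sum_mul, key]
    rw [Finset.sum_congr rfl fun j _ => this j]
    simp
  -- bound on coefficients
  have hbound : ∀ (m : V3), Real.sqrt (∑ i, m i ^ 2) ≤ N₀ → ∀ k : Fin 3, -N₀ ≤ c k m := by
    intro m hm k
    have hmsq : (∑ i, m i ^ 2) ≤ N₀ ^ 2 := by
      have h0 : (0:ℝ) ≤ ∑ i, m i ^ 2 := Finset.sum_nonneg fun i _ => sq_nonneg _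
      nlinarith [Real.sq_sqrt h0, Real.sqrt_nonneg (∑ i, m i ^ 2)]
    set S : ℝ := ∑ j, g k j * m j with hS
    have hcs : S ^ 2 ≤ d k * (∑ i, m i ^ 2) := by
      simpa [hS, hddef] using Finset.sum_mul_sq_le_sq_mul_sq Finset.univ (g k) m
    have h4 : d k * (∑ i, m i ^ 2) ≤ d k * N₀ ^ 2 :=
      mul_le_mul_of_nonneg_left hmsq (by linarith [hd1 k])
    have hS2 : S ^ 2 ≤ (d k * N₀) ^ 2 := by nlinarith [hd1 k, sq_nonneg N₀]
    have hSge : -(d k * N₀) ≤ S := by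
      nlinarith [sq_nonneg (S + d k * N₀), mul_pos (show (0:ℝ) < d k by linarith [hd1 k]) hN₀]
    have hck : c k m = (d k)⁻¹ * S := by
      rw [hcdef, hS, Finset.mul_sum]
      apply Finset.sum_congr rfl
      intros j _
      ring
    rw [hck]
    have hdpos : 0 < d k := by linarith [hd1 k]
    have h2 : -N₀ = (d k)⁻¹ * (-(d k * N₀)) := by
      rw [mul_neg, ← mul_assoc, inv_mul_cancel₀ (hd0 k), one_mul]
    rw [h2]
    exact mul_le_mul_of_nonneg_left hSge (le_of_lt (inv_pos.mpr hdpos))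
  -- define Γ
  refine ⟨![fun m => c 0 m + 2 * N₀, fun m => c 1 m + 2 * N₀, fun m => c 2 m + 2 * N₀,
    fun _ => 2 * N₀], ?_, ?_⟩
  · intro k
    fin_cases k
    · exact ⟨fun i => (d 0)⁻¹ * g 0 i, 2 * N₀, fun m => by
        simp [hcdef, mul_assoc]⟩
    · exact ⟨fun i => (d 1)⁻¹ * g 1 i, 2 * N₀, fun m => by
        simp [hcdef, mul_assoc]⟩
    · exact ⟨fun i => (d 2)⁻¹ * g 2 i, 2 * N₀, fun m => by
        simp [hcdef, mul_assoc]⟩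
    · exact ⟨fun _ => 0, 2 * N₀, fun m => by simp⟩
  · intro m hm
    constructor
    · intro k
      fin_cases k
      · have := hbound m hm 0; simp; linarith
      · have := hbound m hm 1; simp; linarith
      · have := hbound m hm 2; simp; linarith
      · simp; linarith
    · intro i
      have hg0 : g 0 i = (f 0 i : ℝ) := rfl
      have hg1 : g 1 i = (f 1 i : ℝ) := rfl
      have hg2 : g 2 i = (f 2 i : ℝ) := rfl
      have hr := hrec m i
      rw [Fin.sum_univ_three] at hr
      rw [Fin.sum_univ_four]
      simp only [Matrix.cons_val_zero, Matrix.cons_val_one, Matrix.head_cons,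
        Matrix.cons_val_two, Matrix.tail_cons, Matrix.cons_val_three]
      rw [hf4 i]
      push_cast
      rw [hg0, hg1, hg2] at hr
      linarith [hr]
end
end
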